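/- If two finite (possibly disconnected) graphs g1 and g2 each have at most N nodes and are both disconnected (each has at least two nonempty connected components), then for nodes x in g1 and y in g2, the infinite unfolding trees T_x and T_y are equal if and only if the depth-(2N-3) unfolding trees T_x^{(2N-3)} and T_y^{(2N-3)} are equal. -/

import Mathlib

/-- Attributed unfolding trees of depth `d`. -/
def UT (A : Type) : ℕ → Type
  | 0 => A
  | d+1 => A × Multiset (A × UT A d)

/-- A finite attributed undirected graph on node type `V`. -/
structure FinGraph (V A : Type) where
  nbr : V → Finset V
  attr : V → A
  eattr : V → V → A

def FinGraph.Undirected {V A : Type} (g : FinGraph V A) : Prop :=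
  (∀ u v, u ∈ g.nbr v ↔ v ∈ g.nbr u) ∧ (∀ u v, g.eattr u v = g.eattr v u)

/-- Depth-`d` unfolding tree of node `v`. -/
def FinGraph.ut {V A : Type} (g : FinGraph V A) : (d : ℕ) → V → UT A d
  | 0, v => g.attr v
  | d+1, v => (g.attr v, (g.nbr v).val.map fun u => (g.eattr v u, g.ut d u))

/-- 1-WL color refinement with hash functions `h0` and `h`. -/
def FinGraph.wl {V A C : Type} (g : FinGraph V A)
    (h0 : A → C) (h : C × Multiset (A × C) → C) : ℕ → V → C
  | 0, v => h0 (g.attr v)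
  | j+1, v => h (g.wl h0 h j v, (g.nbr v).val.map fun u => (g.eattr v u, g.wl h0 h j u))

/-- Reachability in a graph: `Reach g a b` iff there is a path from `a` to `b`. -/
def Reach {V A : Type} (g : FinGraph V A) (a b : V) : Prop :=
  Relation.ReflTransGen (fun p q => q ∈ g.nbr p) a b

/-- A graph is disconnected if it has at least two (nonempty) connected components,
i.e. some pair of nodes is not connected. -/
def FinGraph.Disconnected {V A : Type} (g : FinGraph V A) : Prop :=
  ∃ a b : V, ¬ Reach g a b

def UT.trunc {A : Type} : ∀ {d : ℕ}, UT A (d+1) → UT A d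
  | 0, t => t.1
  | _+1, t => (t.1, t.2.map fun p => (p.1, UT.trunc p.2))

def UT.root {A : Type} : ∀ {d : ℕ}, UT A d → A
  | 0, t => t
  | _+1, t => t.1

def UT.const {A : Type} (a : A) : ∀ d, UT A d
  | 0 => a
  | _+1 => (a, 0)

lemma trunc_ut {V A : Type} (g : FinGraph V A) : ∀ (d : ℕ) (v : V),
    UT.trunc (g.ut (d+1) v) = g.ut d v
  | 0, v => rfl
  | d+1, v => by
    show (g.attr v, Multiset.map _ (Multiset.map _ (g.nbr v).val)) = _
    rw [Multiset.map_map]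
    refine congrArg _ (Multiset.map_congr rfl fun u _ => ?_)
    show (g.eattr v u, UT.trunc (g.ut (d+1) u)) = _
    rw [trunc_ut g d u]

lemma ut_mono {V A : Type} (g1 : FinGraph V A) {V2 : Type} (g2 : FinGraph V2 A)
    {d e : ℕ} (h : d ≤ e) {u : V} {v : V2}
    (he : g1.ut e u = g2.ut e v) : g1.ut d u = g2.ut d v := by
  induction e with
  | zero => exact (Nat.le_zero.mp h) ▸ he
  | succ e ih =>
    rcases Nat.lt_or_ge d (e+1) with h' | h'
    · exact ih (Nat.lt_succ_iff.mp h') (by rw [← trunc_ut g1 e u, ← trunc_ut g2 e v, he])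
    · exact (Nat.le_antisymm h h') ▸ he

open Classical in
/-- If the depth-`d` partition on a neighbor-closed set `W` determines the depth-`d+1`
partition, the same holds one level up. -/
lemma step_lemma {V A : Type} (g : FinGraph V A) (W : Finset V)
    (hW : ∀ v ∈ W, ∀ u ∈ g.nbr v, u ∈ W) (d : ℕ)
    (H : ∀ u ∈ W, ∀ v ∈ W, g.ut d u = g.ut d v → g.ut (d+1) u = g.ut (d+1) v) :
    ∀ u ∈ W, ∀ v ∈ W, g.ut (d+1) u = g.ut (d+1) v → g.ut (d+2) u = g.ut (d+2) v := by
  intro u hu v hv h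
  set G : A × UT A d → A × UT A (d+1) := fun p =>
    (p.1, if hex : ∃ w, w ∈ W ∧ g.ut d w = p.2 then g.ut (d+1) hex.choose
          else UT.const (UT.root p.2) (d+1)) with hG
  have hGW : ∀ w ∈ W, ∀ e : A, G (e, g.ut d w) = (e, g.ut (d+1) w) := by
    intro w hw e
    have hex : ∃ w', w' ∈ W ∧ g.ut d w' = g.ut d w := ⟨w, hw, rfl⟩
    simp only [hG, dif_pos hex]
    exact congrArg _ (H _ hex.choose_spec.1 w hw hex.choose_spec.2)
  have key : ∀ z, z ∈ W → (g.nbr z).val.map (fun w => (g.eattr z w, g.ut (d+1) w))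
      = Multiset.map G ((g.nbr z).val.map (fun w => (g.eattr z w, g.ut d w))) := by
    intro z hz
    rw [Multiset.map_map]
    exact Multiset.map_congr rfl fun w hw => (hGW w (hW z hz w hw) (g.eattr z w)).symm
  have h1 : g.ut (d+1) u = (g.attr u, (g.nbr u).val.map fun w => (g.eattr u w, g.ut d w)) := rfl
  have h2 : g.ut (d+1) v = (g.attr v, (g.nbr v).val.map fun w => (g.eattr v w, g.ut d w)) := rfl
  rw [h1, h2] at h; replace h := Prod.mk.inj (α := A) (β := Multiset (A × UT A d)) h
  show (g.attr u, (g.nbr u).val.map fun w => (g.eattr u w, g.ut (d+1) w))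
      = (g.attr v, (g.nbr v).val.map fun w => (g.eattr v w, g.ut (d+1) w))
  rw [key u hu, key v hv, h.1, h.2]

/-- From a stabilization point, equality of depth-`d0` trees gives equality at all depths. -/
lemma stab_all {V A : Type} (g : FinGraph V A) (W : Finset V)
    (hW : ∀ v ∈ W, ∀ u ∈ g.nbr v, u ∈ W) (d0 : ℕ)
    (H : ∀ u ∈ W, ∀ v ∈ W, g.ut d0 u = g.ut d0 v → g.ut (d0+1) u = g.ut (d0+1) v)
    {u v : V} (hu : u ∈ W) (hv : v ∈ W) (h : g.ut d0 u = g.ut d0 v) :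
    ∀ e : ℕ, g.ut e u = g.ut e v := by
  have Hk : ∀ k, ∀ u ∈ W, ∀ v ∈ W,
      g.ut (d0+k) u = g.ut (d0+k) v → g.ut (d0+k+1) u = g.ut (d0+k+1) v := by
    intro k
    induction k with
    | zero => exact H
    | succ k ih => exact step_lemma g W hW (d0+k) ih
  have up : ∀ k, g.ut (d0+k) u = g.ut (d0+k) v := by
    intro k
    induction k with
    | zero => exact h
    | succ k ih => exact Hk k u hu v hv ih
  intro e
  rcases Nat.lt_or_ge e d0 with h' | h'
  · exact ut_mono g g (Nat.le_of_lt h') h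
  · obtain ⟨k, rfl⟩ := Nat.exists_eq_add_of_le h'
    exact up k

open Classical in
lemma exists_stab {V A : Type} [Fintype V] (g : FinGraph V A) (W : Finset V)
    (hne : W.Nonempty) :
    ∃ d ≤ W.card - 1, ∀ u ∈ W, ∀ v ∈ W,
      g.ut d u = g.ut d v → g.ut (d+1) u = g.ut (d+1) v := by
  classical
  set n : ℕ → ℕ := fun d => (W.image (g.ut d)).card with hn
  have himg : ∀ d, W.image (g.ut d) = (W.image (g.ut (d+1))).image UT.trunc := by
    intro d
    rw [Finset.image_image]
    exact Finset.image_congr fun w _ => (trunc_ut g d w).symm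
  have hmono : ∀ d, n d ≤ n (d+1) := fun d => by
    rw [hn]; simp only; rw [himg d]; exact Finset.card_image_le
  have hub : ∀ d, n d ≤ W.card := fun d => Finset.card_image_le
  have hstab : ∃ d ≤ W.card - 1, n d = n (d+1) := by
    by_contra hcon
    push_neg at hcon
    have grow : ∀ k ≤ W.card, n 0 + k ≤ n k := by
      intro k hk
      induction k with
      | zero => simp
      | succ k ih =>
        have h1 : n 0 + k ≤ n k := ih (Nat.le_of_succ_le hk)
        have h2 : n k < n (k+1) :=
          Nat.lt_of_le_of_ne (hmono k) (hcon k (Nat.le_sub_one_of_lt hk))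
        omega
    have h0 : 1 ≤ n 0 := Finset.card_pos.mpr (hne.image _)
    have := grow W.card le_rfl
    have := hub W.card
    omega
  obtain ⟨d, hd, heq⟩ := hstab
  refine ⟨d, hd, fun u hu v hv h => ?_⟩
  have hinj : Set.InjOn (UT.trunc (A:=A) (d:=d)) ((W.image (g.ut (d+1)) : Finset (UT A (d+1))) : Set (UT A (d+1))) := by
    apply Finset.injOn_of_card_image_eq
    rw [← himg d]
    exact heq
  have h1 : (g.ut (d+1) u : UT A (d+1)) ∈ (W.image (g.ut (d+1)) : Finset _) :=
    Finset.mem_image_of_mem _ hu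
  have h2 : (g.ut (d+1) v : UT A (d+1)) ∈ (W.image (g.ut (d+1)) : Finset _) :=
    Finset.mem_image_of_mem _ hv
  exact hinj h1 h2 (by rw [trunc_ut, trunc_ut]; exact h)

def sumGraph {V1 V2 A : Type} (g1 : FinGraph V1 A) (g2 : FinGraph V2 A) :
    FinGraph (V1 ⊕ V2) A where
  nbr v := match v with
    | .inl a => (g1.nbr a).map ⟨Sum.inl, Sum.inl_injective⟩
    | .inr b => (g2.nbr b).map ⟨Sum.inr, Sum.inr_injective⟩
  attr v := match v with | .inl a => g1.attr a | .inr b => g2.attr b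
  eattr u v := match u, v with
    | .inl a, .inl b => g1.eattr a b
    | .inr a, .inr b => g2.eattr a b
    | .inl a, .inr _ => g1.attr a
    | .inr a, .inl _ => g2.attr a

lemma sum_ut_inl {V1 V2 A : Type} (g1 : FinGraph V1 A) (g2 : FinGraph V2 A) :
    ∀ (d : ℕ) (a : V1), (sumGraph g1 g2).ut d (.inl a) = g1.ut d a
  | 0, a => rfl
  | d+1, a => by
    show (g1.attr a, Multiset.map _ (Multiset.map _ (g1.nbr a).val)) = _
    rw [Multiset.map_map]
    refine congrArg _ (Multiset.map_congr rfl fun u _ => ?_)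
    show (g1.eattr a u, (sumGraph g1 g2).ut d (.inl u)) = _
    rw [sum_ut_inl g1 g2 d u]

lemma sum_ut_inr {V1 V2 A : Type} (g1 : FinGraph V1 A) (g2 : FinGraph V2 A) :
    ∀ (d : ℕ) (b : V2), (sumGraph g1 g2).ut d (.inr b) = g2.ut d b
  | 0, b => rfl
  | d+1, b => by
    show (g2.attr b, Multiset.map _ (Multiset.map _ (g2.nbr b).val)) = _
    rw [Multiset.map_map]
    refine congrArg _ (Multiset.map_congr rfl fun u _ => ?_)
    show (g2.eattr b u, (sumGraph g1 g2).ut d (.inr u)) = _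
    rw [sum_ut_inr g1 g2 d u]

lemma reach_symm {V A : Type} (g : FinGraph V A) (hg : g.Undirected) {a b : V}
    (h : Reach g a b) : Reach g b a :=
  (@Relation.ReflTransGen.stdSymm _ (fun p q => q ∈ g.nbr p)
    ⟨fun p q hpq => (hg.1 q p).mp hpq⟩).symm _ _ h

open Classical in
/-- The component of a node in a graph on a type with card ≤ N, when the graph is
disconnected, has at most N-1 elements. -/
lemma comp_card_le {V A : Type} [Fintype V] (g : FinGraph V A) (hg : g.Undirected)
    (hd : ∃ a b : V, ¬ Reach g a b) (x : V) (N : ℕ) (hN : Fintype.card V ≤ N) :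
    (Finset.univ.filter (fun u => Reach g x u) : Finset V).card ≤ N - 1 := by
  classical
  obtain ⟨a, b, hab⟩ := hd
  have : ∃ z : V, z ∉ Finset.univ.filter (fun u => Reach g x u) := by
    by_contra hcon
    push_neg at hcon
    have ha := (Finset.mem_filter.mp (hcon a)).2
    have hb := (Finset.mem_filter.mp (hcon b)).2
    exact hab ((reach_symm g hg ha).trans hb)
  obtain ⟨z, hz⟩ := this
  have hss : (Finset.univ.filter (fun u => Reach g x u) : Finset V) ⊂ Finset.univ := by
    refine Finset.ssubset_univ_iff.mpr fun h => hz ?_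
    rw [h]; exact Finset.mem_univ z
  have := Finset.card_lt_card hss
  rw [Finset.card_univ] at this
  omega


/-- **Tightened depth bound for disconnected graphs**: if both graphs (of at most `N`
nodes each) are disconnected, depth `2N-3` already decides equality of the infinite
unfolding trees. -/
theorem ut_eq_iff_ut_depth_eq_disconnected {V1 V2 A : Type} [Fintype V1] [Fintype V2]
    (g1 : FinGraph V1 A) (g2 : FinGraph V2 A)
    (hg1 : g1.Undirected) (hg2 : g2.Undirected)
    (hd1 : g1.Disconnected) (hd2 : g2.Disconnected)
    (N : ℕ) (hN1 : Fintype.card V1 ≤ N) (hN2 : Fintype.card V2 ≤ N)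
    (x : V1) (y : V2) :
    (∀ d : ℕ, g1.ut d x = g2.ut d y) ↔ g1.ut (2*N - 3) x = g2.ut (2*N - 3) y := by
  classical
  constructor
  · intro h; exact h _
  · intro h d
    set g := sumGraph g1 g2 with hg
    obtain ⟨a, b, hab⟩ := hd1
    have hne_ab : a ≠ b := fun he => hab (he ▸ Relation.ReflTransGen.refl)
    have hN2' : 2 ≤ N := by
      have := Fintype.one_lt_card_iff.mpr ⟨a, b, hne_ab⟩
      omega
    set C1 : Finset V1 := Finset.univ.filter (fun u => Reach g1 x u) with hC1
    set C2 : Finset V2 := Finset.univ.filter (fun u => Reach g2 y u) with hC2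
    set W : Finset (V1 ⊕ V2) :=
      C1.map ⟨Sum.inl, Sum.inl_injective⟩ ∪ C2.map ⟨Sum.inr, Sum.inr_injective⟩ with hWdef
    have hxW : Sum.inl x ∈ W := by
      apply Finset.mem_union_left
      exact Finset.mem_map_of_mem _ (Finset.mem_filter.mpr ⟨Finset.mem_univ x,
        Relation.ReflTransGen.refl⟩)
    have hyW : Sum.inr y ∈ W := by
      apply Finset.mem_union_right
      exact Finset.mem_map_of_mem _ (Finset.mem_filter.mpr ⟨Finset.mem_univ y,
        Relation.ReflTransGen.refl⟩)
    have hWc : ∀ v ∈ W, ∀ u ∈ g.nbr v, u ∈ W := by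
      intro v hv u hu
      rcases Finset.mem_union.mp hv with hv1 | hv2
      · obtain ⟨c, hc, rfl⟩ := Finset.mem_map.mp hv1
        obtain ⟨u', hu', rfl⟩ := Finset.mem_map.mp hu
        refine Finset.mem_union_left _ (Finset.mem_map_of_mem _ ?_)
        exact Finset.mem_filter.mpr ⟨Finset.mem_univ u',
          ((Finset.mem_filter.mp hc).2).tail hu'⟩
      · obtain ⟨c, hc, rfl⟩ := Finset.mem_map.mp hv2
        obtain ⟨u', hu', rfl⟩ := Finset.mem_map.mp hu
        refine Finset.mem_union_right _ (Finset.mem_map_of_mem _ ?_)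
        exact Finset.mem_filter.mpr ⟨Finset.mem_univ u',
          ((Finset.mem_filter.mp hc).2).tail hu'⟩
    have hc1 : C1.card ≤ N - 1 := comp_card_le g1 hg1 ⟨a, b, hab⟩ x N hN1
    have hc2 : C2.card ≤ N - 1 := comp_card_le g2 hg2 hd2 y N hN2
    have hWcard : W.card ≤ 2 * N - 2 := by
      have h1 := Finset.card_union_le (C1.map ⟨Sum.inl, Sum.inl_injective⟩)
        (C2.map ⟨Sum.inr, Sum.inr_injective⟩)
      rw [Finset.card_map, Finset.card_map] at h1
      rw [hWdef]
      omega
    obtain ⟨d0, hd0, Hstab⟩ := exists_stab g W ⟨Sum.inl x, hxW⟩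
    have hd0' : d0 ≤ 2 * N - 3 := by omega
    have h' : g.ut (2 * N - 3) (Sum.inl x) = g.ut (2 * N - 3) (Sum.inr y) := by
      rw [sum_ut_inl, sum_ut_inr]; exact h
    have hd0eq : g.ut d0 (Sum.inl x) = g.ut d0 (Sum.inr y) := ut_mono g g hd0' h'
    have hall := stab_all g W hWc d0 Hstab hxW hyW hd0eq d
    rw [← sum_ut_inl g1 g2 d x, ← sum_ut_inr g1 g2 d y]
    exact hall
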